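/- Let Γ be a d-closed class of normal-form games. A solution concept φ on Γ satisfies IIS, MC, ISDS, and JO if and only if φ(G) equals the set of Nash equilibria of G for every G in Γ. -/

import Mathlib

universe u v

variable {ι : Type u} {σ : ι → Type v}

/-- A normal-form game: nonempty strategy sets and complete, transitive
preferences over strategy profiles. -/
structure Game (ι : Type u) (σ : ι → Type v) where
  S : ∀ i, Set (σ i)
  nonempty : ∀ i, (S i).Nonempty
  pref : ι → (∀ i, σ i) → (∀ i, σ i) → Prop
  complete : ∀ i s t, (∀ j, s j ∈ S j) → (∀ j, t j ∈ S j) → pref i s t ∨ pref i t s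
  trans : ∀ i s t u, (∀ j, s j ∈ S j) → (∀ j, t j ∈ S j) → (∀ j, u j ∈ S j) →
    pref i s t → pref i t u → pref i s u

/-- The set of feasible strategy profiles of a game. -/
def Game.profiles (G : Game ι σ) : Set (∀ i, σ i) := {s | ∀ i, s i ∈ G.S i}

/-- The strict part of player `i`'s preference. -/
def Game.StrictPref (G : Game ι σ) (i : ι) (s t : ∀ j, σ j) : Prop :=
  G.pref i s t ∧ ¬ G.pref i t s

/-- Nash equilibrium: a feasible profile from which no player can unilaterally
deviate to a strictly preferred profile. -/
def Game.IsNash [DecidableEq ι] (G : Game ι σ) (s : ∀ i, σ i) : Prop :=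
  s ∈ G.profiles ∧ ∀ i, ∀ t ∈ G.S i, G.pref i s (Function.update s i t)

/-- `G'` is a reduction of `G`: same players, nonempty subsets of strategy
sets, preferences restricted to the smaller profile set. -/
def IsReduction (G' G : Game ι σ) : Prop :=
  (∀ i, G'.S i ⊆ G.S i) ∧
  ∀ i s t, G'.pref i s t ↔ (G.pref i s t ∧ s ∈ G'.profiles ∧ t ∈ G'.profiles)

/-- `G'` is a strict reduction of `G`: a reduction obtained by removing at
least one strategy, every removed strategy being strictly dominated by some
remaining strategy of the same player. -/
def IsStrictReduction [DecidableEq ι] (G' G : Game ι σ) : Prop :=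
  IsReduction G' G ∧ (∃ j, (G.S j \ G'.S j).Nonempty) ∧
  ∀ i, ∀ si ∈ G.S i \ G'.S i, ∃ si' ∈ G'.S i,
    ∀ s ∈ G.profiles, G.StrictPref i (Function.update s i si') (Function.update s i si)

/-- `s` is a profile of strategies each of which maximizes its player's
preference uniformly over all opponents' profiles (weak dominance). -/
def JointlyOptimal [DecidableEq ι] (G : Game ι σ) (s : ∀ i, σ i) : Prop :=
  s ∈ G.profiles ∧ ∀ i, ∀ t ∈ G.profiles, ∀ u ∈ G.S i,
    G.pref i (Function.update t i (s i)) (Function.update t i u)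

/-- The reduction `G'` of `G` has a dummy player. -/
def HasDummy (G' G : Game ι σ) : Prop :=
  ∃ j, (∃ x, G'.S j = {x}) ∧ ∀ i, i ≠ j → G'.S i = G.S i ∨ ∃ x, G'.S i = {x}

/-- The reduction `G'` of `G` has a quasi-dummy player. -/
def HasQuasiDummy (G' G : Game ι σ) : Prop :=
  ∃ j, (∃ x y : σ j, x ≠ y ∧ G'.S j = {x, y}) ∧
    ∀ i, i ≠ j → G'.S i = G.S i ∨ ∃ x y : σ i, G'.S i ⊆ {x, y}

/-- A class of games is d-closed if it contains every reduction with a dummy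
or quasi-dummy player of each of its games. -/
def DClosed (Γ : Set (Game ι σ)) : Prop :=
  ∀ G ∈ Γ, ∀ G', IsReduction G' G → (HasDummy G' G ∨ HasQuasiDummy G' G) → G' ∈ Γ

/-- Independence of irrelevant strategies. -/
def SatIIS (Γ : Set (Game ι σ)) (φ : Game ι σ → Set (∀ i, σ i)) : Prop :=
  ∀ G ∈ Γ, ∀ G' ∈ Γ, IsReduction G' G → G'.profiles ∩ φ G ⊆ φ G'

/-- Merging consistency. -/
def SatMC (Γ : Set (Game ι σ)) (φ : Game ι σ → Set (∀ i, σ i)) : Prop :=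
  ∀ G ∈ Γ, ∀ G' ∈ Γ, ∀ G'' ∈ Γ, IsReduction G' G → IsReduction G'' G →
    (∀ i, G'.S i ∪ G''.S i = G.S i) → φ G' ∩ φ G'' ⊆ φ G

/-- Invariance to strictly dominated strategies. -/
def SatISDS [DecidableEq ι] (Γ : Set (Game ι σ)) (φ : Game ι σ → Set (∀ i, σ i)) : Prop :=
  ∀ G ∈ Γ, ∀ G' ∈ Γ, IsStrictReduction G' G → φ G = φ G'

/-- Joint optimality. -/
def SatJO [DecidableEq ι] (Γ : Set (Game ι σ)) (φ : Game ι σ → Set (∀ i, σ i)) : Prop :=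
  ∀ G ∈ Γ, ∀ s, JointlyOptimal G s → s ∈ φ G

/-!
Nash equilibria satisfy the four axioms directly. Conversely, let `φ` satisfy them.

If `s ∈ φ G` is not an equilibrium, some player `i` has a strictly profitable deviation `y`.
By IIS, `s` stays in `φ` of the game where only `i` moves, choosing between `s i` and `y`
(a quasi-dummy reduction), and there ISDS deletes the strictly dominated `s i`: absurd.

If `s` is an equilibrium, it is jointly optimal in every game where at most one player moves
and the others are frozen at `s`. MC glues such games, unfreezing the players one at a time;
they stay in `Γ` as long as somebody is frozen (a dummy player), and `G` itself is glued from
the game of one player and the game of all the others.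
-/

open Function

theorem Function.update_eq_update_of_forall_ne [DecidableEq ι] {u s : ∀ i, σ i} {i : ι}
    (h : ∀ j ≠ i, u j = s j) (y : σ i) : update u i y = update s i y :=
  update_eq_iff.2 ⟨(update_self ..).symm, fun j hj => (h j hj).trans (update_of_ne hj ..).symm⟩

namespace Game

variable {G : Game ι σ} {s : ∀ i, σ i}

theorem pref_refl (G : Game ι σ) (i : ι) (hs : s ∈ G.profiles) : G.pref i s s :=
  (G.complete i s s hs hs).elim id id

theorem update_mem_profiles [DecidableEq ι] (hs : s ∈ G.profiles) {i : ι} {x : σ i}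
    (hx : x ∈ G.S i) : update s i x ∈ G.profiles :=
  (forall_update_iff s fun j y => y ∈ G.S j).2 ⟨hx, fun j _ => hs j⟩

def restrict (G : Game ι σ) (T : ∀ i, Set (σ i)) (hT : ∀ i, T i ⊆ G.S i)
    (hne : ∀ i, (T i).Nonempty) : Game ι σ where
  S := T
  nonempty := hne
  pref i s t := G.pref i s t ∧ (∀ j, s j ∈ T j) ∧ ∀ j, t j ∈ T j
  complete i s t hs ht :=
    (G.complete i s t (fun j => hT j (hs j)) (fun j => hT j (ht j))).imp
      (⟨·, hs, ht⟩) (⟨·, ht, hs⟩)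
  trans i s t u hs ht hu hst htu :=
    ⟨G.trans i s t u (fun j => hT j (hs j)) (fun j => hT j (ht j)) (fun j => hT j (hu j))
      hst.1 htu.1, hs, hu⟩

theorem isReduction_restrict {T : ∀ i, Set (σ i)} {hT : ∀ i, T i ⊆ G.S i}
    {hne : ∀ i, (T i).Nonempty} : IsReduction (G.restrict T hT hne) G :=
  ⟨hT, fun _ _ _ => Iff.rfl⟩

end Game

open Game

namespace IsReduction

variable {G G' G'' : Game ι σ} {s t : ∀ i, σ i} {i : ι}

theorem profiles_subset (h : IsReduction G' G) : G'.profiles ⊆ G.profiles :=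
  fun _ hs j => h.1 j (hs j)

theorem pref_iff (h : IsReduction G' G) (hs : s ∈ G'.profiles) (ht : t ∈ G'.profiles) :
    G'.pref i s t ↔ G.pref i s t := by
  simp only [h.2, hs, ht, and_true]

theorem strictPref_iff (h : IsReduction G' G) (hs : s ∈ G'.profiles) (ht : t ∈ G'.profiles) :
    G'.StrictPref i s t ↔ G.StrictPref i s t := by
  simp only [Game.StrictPref, h.pref_iff hs ht, h.pref_iff ht hs]

theorem of_subset (h' : IsReduction G' G) (h'' : IsReduction G'' G)
    (hS : ∀ i, G''.S i ⊆ G'.S i) : IsReduction G'' G' := by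
  have hsub : G''.profiles ⊆ G'.profiles := fun _ hs j => hS j (hs j)
  refine ⟨hS, fun i s t => ?_⟩
  rw [h''.2, h'.2]
  exact ⟨fun ⟨hst, hs, ht⟩ => ⟨⟨hst, hsub hs, hsub ht⟩, hs, ht⟩,
    fun ⟨⟨hst, _, _⟩, hs, ht⟩ => ⟨hst, hs, ht⟩⟩

end IsReduction

section Nash

variable [DecidableEq ι] {G G' G'' : Game ι σ} {s : ∀ i, σ i}

theorem Game.IsNash.of_isReduction (h : IsReduction G' G) (hs : G.IsNash s)
    (hs' : s ∈ G'.profiles) : G'.IsNash s :=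
  ⟨hs', fun i x hx =>
    (h.pref_iff hs' (update_mem_profiles hs' hx)).2 (hs.2 i x (h.1 i hx))⟩

theorem Game.IsNash.of_union (h' : IsReduction G' G) (h'' : IsReduction G'' G)
    (hS : ∀ i, G'.S i ∪ G''.S i = G.S i) (hs' : G'.IsNash s) (hs'' : G''.IsNash s) :
    G.IsNash s := by
  refine ⟨h'.profiles_subset hs'.1, fun i x hx => ?_⟩
  rcases (hS i).symm ▸ hx with hx | hx
  · exact ((h'.2 _ _ _).1 (hs'.2 i x hx)).1
  · exact ((h''.2 _ _ _).1 (hs''.2 i x hx)).1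

theorem IsStrictReduction.isNash_iff (h : IsStrictReduction G' G) :
    G'.IsNash s ↔ G.IsNash s := by
  obtain ⟨hred, -, hdom⟩ := h
  constructor
  · intro hs'
    have hs := hred.profiles_subset hs'.1
    refine ⟨hs, fun i x hx => ?_⟩
    by_cases hx' : x ∈ G'.S i
    · exact ((hred.2 _ _ _).1 (hs'.2 i x hx')).1
    · obtain ⟨y, hy, hyx⟩ := hdom i x ⟨hx, hx'⟩
      exact G.trans i _ _ _ hs (update_mem_profiles hs (hred.1 i hy))
        (update_mem_profiles hs hx) ((hred.2 _ _ _).1 (hs'.2 i y hy)).1 (hyx s hs).1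
  · intro hs
    have hs' : s ∈ G'.profiles := fun i => by_contra fun hi => by
      obtain ⟨y, hy, hys⟩ := hdom i (s i) ⟨hs.1 i, hi⟩
      have := (hys s hs.1).2
      rw [update_eq_self] at this
      exact this (hs.2 i y (hred.1 i hy))
    exact hs.of_isReduction hred hs'

theorem JointlyOptimal.isNash (h : JointlyOptimal G s) : G.IsNash s :=
  ⟨h.1, fun i x hx => by simpa using h.2 i s h.1 x hx⟩

theorem Game.IsNash.jointlyOptimal (hs : G.IsNash s)
    (hfree : ∀ i j, i ≠ j → G.S i = {s i} ∨ G.S j = {s j}) : JointlyOptimal G s := by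
  refine ⟨hs.1, fun i t ht x hx => ?_⟩
  by_cases hi : G.S i = {s i}
  · rw [hi, Set.mem_singleton_iff] at hx
    rw [hx]
    exact G.pref_refl i (update_mem_profiles ht (hs.1 i))
  · have hts : ∀ j ≠ i, t j = s j := fun j hj => by
      simpa [(hfree i j hj.symm).resolve_left hi] using ht j
    rw [update_eq_update_of_forall_ne hts, update_eq_update_of_forall_ne hts, update_eq_self]
    exact hs.2 i x hx

end Nash

namespace Game

variable [DecidableEq ι] {G : Game ι σ} {s : ∀ i, σ i}

def unilateral (G : Game ι σ) (s : ∀ i, σ i) (hs : s ∈ G.profiles) (i : ι) (X : Set (σ i))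
    (hX : X ⊆ G.S i) (hne : X.Nonempty) : Game ι σ :=
  G.restrict (update (fun j => {s j}) i X)
    ((forall_update_iff _ fun j (T : Set (σ j)) => T ⊆ G.S j).2
      ⟨hX, fun j _ => Set.singleton_subset_iff.2 (hs j)⟩)
    ((forall_update_iff _ fun j (T : Set (σ j)) => T.Nonempty).2
      ⟨hne, fun j _ => Set.singleton_nonempty (s j)⟩)

variable {hs : s ∈ G.profiles} {i : ι} {X : Set (σ i)} {hX : X ⊆ G.S i} {hne : X.Nonempty}

theorem unilateral_S : (G.unilateral s hs i X hX hne).S = update (fun j => {s j}) i X :=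
  rfl

@[simp] theorem unilateral_S_self : (G.unilateral s hs i X hX hne).S i = X := by
  simp [unilateral_S]

theorem unilateral_S_of_ne {j : ι} (hj : j ≠ i) :
    (G.unilateral s hs i X hX hne).S j = {s j} := by
  simp [unilateral_S, hj]

theorem isReduction_unilateral : IsReduction (G.unilateral s hs i X hX hne) G :=
  isReduction_restrict

theorem mem_unilateral_profiles (hsX : s i ∈ X) : s ∈ (G.unilateral s hs i X hX hne).profiles :=
  fun j => by
    rcases eq_or_ne j i with rfl | hj
    · simpa using hsX
    · simp [unilateral_S_of_ne hj]

theorem update_eq_of_mem_unilateral_profiles {u : ∀ i, σ i}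
    (hu : u ∈ (G.unilateral s hs i X hX hne).profiles) (y : σ i) :
    update u i y = update s i y :=
  update_eq_update_of_forall_ne (fun j hj => by simpa [unilateral_S_of_ne hj] using hu j) y

theorem hasDummy_unilateral_singleton {H : Game ι σ} {y : σ i} {hX : {y} ⊆ G.S i}
    {hne : ({y} : Set (σ i)).Nonempty} : HasDummy (G.unilateral s hs i {y} hX hne) H :=
  ⟨i, ⟨y, unilateral_S_self⟩, fun _ hj => Or.inr ⟨_, unilateral_S_of_ne hj⟩⟩

theorem hasQuasiDummy_unilateral_pair {H : Game ι σ} {x y : σ i} (hxy : x ≠ y)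
    {hX : {x, y} ⊆ G.S i} {hne : ({x, y} : Set (σ i)).Nonempty} :
    HasQuasiDummy (G.unilateral s hs i {x, y} hX hne) H :=
  ⟨i, ⟨x, y, hxy, unilateral_S_self⟩, fun j hj =>
    Or.inr ⟨s j, s j, (unilateral_S_of_ne hj).trans_subset (by simp)⟩⟩

theorem isStrictReduction_unilateral {y : σ i} (hy : y ∈ G.S i)
    (hys : G.StrictPref i (update s i y) s) :
    IsStrictReduction (G.unilateral s hs i {y} (Set.singleton_subset_iff.2 hy)
        (Set.singleton_nonempty y))
      (G.unilateral s hs i {s i, y} (Set.insert_subset (hs i) (Set.singleton_subset_iff.2 hy))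
        (Set.insert_nonempty _ _)) := by
  have hne : s i ≠ y := by
    rintro rfl
    exact hys.2 (by rw [update_eq_self]; exact G.pref_refl i hs)
  refine ⟨isReduction_unilateral.of_subset isReduction_unilateral fun j => ?_, ⟨i, s i, ?_⟩,
    fun j x hx => ?_⟩
  · rcases eq_or_ne j i with rfl | hj
    · simp
    · simp [unilateral_S_of_ne hj]
  · simpa using hne
  · rcases eq_or_ne j i with rfl | hj
    · obtain rfl : x = s j := by
        simp only [Set.mem_sdiff, unilateral_S_self, Set.mem_insert_iff,
          Set.mem_singleton_iff] at hx
        exact hx.1.resolve_right hx.2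
      refine ⟨y, by simp, fun u hu => ?_⟩
      rw [update_eq_of_mem_unilateral_profiles hu, update_eq_of_mem_unilateral_profiles hu,
        update_eq_self]
      refine (isReduction_unilateral.strictPref_iff ?_ (mem_unilateral_profiles (by simp))).2 hys
      rw [← update_eq_of_mem_unilateral_profiles hu]
      exact update_mem_profiles hu (by simp)
    · simp [unilateral_S_of_ne hj] at hx

def freezeOutside (G : Game ι σ) (s : ∀ i, σ i) (hs : s ∈ G.profiles) (A : Finset ι) :
    Game ι σ :=
  G.restrict (fun j => if j ∈ A then G.S j else {s j})
    (fun j => by split_ifs; exacts [subset_rfl, Set.singleton_subset_iff.2 (hs j)])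
    (fun j => ⟨s j, by split_ifs; exacts [hs j, rfl]⟩)

variable {A B : Finset ι}

@[simp] theorem freezeOutside_S (j : ι) :
    (G.freezeOutside s hs A).S j = if j ∈ A then G.S j else {s j} :=
  rfl

theorem mem_freezeOutside_profiles : s ∈ (G.freezeOutside s hs A).profiles :=
  fun j => by by_cases hj : j ∈ A <;> simp [hj, hs j]

theorem freezeOutside_S_union (j : ι) :
    (G.freezeOutside s hs A).S j ∪ (G.freezeOutside s hs B).S j =
      (G.freezeOutside s hs (A ∪ B)).S j := by
  by_cases hA : j ∈ A <;> by_cases hB : j ∈ B <;> simp [hA, hB, hs j]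

theorem isReduction_freezeOutside : IsReduction (G.freezeOutside s hs A) G :=
  isReduction_restrict

theorem isReduction_freezeOutside_of_subset (hAB : A ⊆ B) :
    IsReduction (G.freezeOutside s hs A) (G.freezeOutside s hs B) :=
  isReduction_freezeOutside.of_subset isReduction_freezeOutside fun j => by
    by_cases hA : j ∈ A
    · simp [hA, hAB hA]
    · by_cases hB : j ∈ B <;> simp [hA, hB, hs j]

theorem hasDummy_freezeOutside {j : ι} (hj : j ∉ A) : HasDummy (G.freezeOutside s hs A) G :=
  ⟨j, ⟨s j, by simp [hj]⟩, fun k _ => by by_cases hk : k ∈ A <;> simp [hk]⟩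

theorem IsNash.jointlyOptimal_freezeOutside (hsN : G.IsNash s) (hA : (A : Set ι).Subsingleton) :
    JointlyOptimal (G.freezeOutside s hsN.1 A) s := by
  refine (hsN.of_isReduction isReduction_freezeOutside mem_freezeOutside_profiles).jointlyOptimal
    fun i j hij => ?_
  by_cases hi : i ∈ A
  · have hj : j ∉ A := fun hj => hij (hA hi hj)
    simp [hj]
  · simp [hi]

end Game

section Characterization

variable [DecidableEq ι] {Γ : Set (Game ι σ)} {φ : Game ι σ → Set (∀ i, σ i)}
  {G : Game ι σ} {s : ∀ i, σ i}

theorem isNash_of_mem_solution (hsol : ∀ G ∈ Γ, φ G ⊆ G.profiles) (hd : DClosed Γ)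
    (hIIS : SatIIS Γ φ) (hISDS : SatISDS Γ φ) (hG : G ∈ Γ) (hsφ : s ∈ φ G) :
    G.IsNash s := by
  have hs := hsol G hG hsφ
  refine ⟨hs, fun i y hy => by_contra fun hbad => ?_⟩
  have hys : G.StrictPref i (update s i y) s :=
    ⟨(G.complete i _ _ hs (update_mem_profiles hs hy)).resolve_left hbad, hbad⟩
  have hne : s i ≠ y := fun h => hbad (by rw [← h, update_eq_self]; exact G.pref_refl i hs)
  let G₂ := G.unilateral s hs i {s i, y}
    (Set.insert_subset (hs i) (Set.singleton_subset_iff.2 hy)) (Set.insert_nonempty _ _)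
  let G₁ := G.unilateral s hs i {y} (Set.singleton_subset_iff.2 hy) (Set.singleton_nonempty y)
  have hstrict : IsStrictReduction G₁ G₂ := isStrictReduction_unilateral hy hys
  have hG₂ : G₂ ∈ Γ :=
    hd G hG _ isReduction_unilateral (Or.inr (hasQuasiDummy_unilateral_pair hne))
  have hG₁ : G₁ ∈ Γ := hd _ hG₂ _ hstrict.1 (Or.inl hasDummy_unilateral_singleton)
  have hs₂ : s ∈ φ G₂ :=
    hIIS G hG _ hG₂ isReduction_unilateral ⟨mem_unilateral_profiles (by simp), hsφ⟩
  rw [hISDS _ hG₂ _ hG₁ hstrict] at hs₂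
  exact hne (by simpa [G₁] using hsol _ hG₁ hs₂ i)

theorem freezeOutside_mem (hd : DClosed Γ) (hG : G ∈ Γ) (hs : s ∈ G.profiles) {A : Finset ι}
    {j : ι} (hj : j ∉ A) : G.freezeOutside s hs A ∈ Γ :=
  hd G hG _ isReduction_freezeOutside (Or.inl (hasDummy_freezeOutside hj))

theorem mem_solution_freezeOutside (hd : DClosed Γ) (hMC : SatMC Γ φ) (hJO : SatJO Γ φ)
    (hG : G ∈ Γ) (hsN : G.IsNash s) (A : Finset ι) (hA : ∃ j, j ∉ A) :
    s ∈ φ (G.freezeOutside s hsN.1 A) := by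
  induction A using Finset.induction_on with
  | empty =>
    obtain ⟨j, hj⟩ := hA
    exact hJO _ (freezeOutside_mem hd hG _ hj) s (hsN.jointlyOptimal_freezeOutside (by simp))
  | insert i A _ ih =>
    obtain ⟨j, hj⟩ := hA
    have hjA : j ∉ A := fun h => hj (Finset.mem_insert_of_mem h)
    have hji : j ∉ ({i} : Finset ι) := fun h => hj (by simp_all)
    have hsi : s ∈ φ (G.freezeOutside s hsN.1 {i}) :=
      hJO _ (freezeOutside_mem hd hG _ hji) s (hsN.jointlyOptimal_freezeOutside (by simp))
    refine hMC _ (freezeOutside_mem hd hG _ hj) _ (freezeOutside_mem hd hG _ hji) _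
      (freezeOutside_mem hd hG _ hjA)
      (isReduction_freezeOutside_of_subset (by simp)) (isReduction_freezeOutside_of_subset
        (Finset.subset_insert i A)) (fun k => ?_) ⟨hsi, ih ⟨j, hjA⟩⟩
    rw [Finset.insert_eq]
    exact freezeOutside_S_union k

theorem mem_solution_of_isNash [Fintype ι] (hd : DClosed Γ) (hMC : SatMC Γ φ)
    (hJO : SatJO Γ φ) (hG : G ∈ Γ) (hsN : G.IsNash s) : s ∈ φ G := by
  rcases subsingleton_or_nontrivial ι with hι | hι
  · exact hJO G hG s (hsN.jointlyOptimal fun i j hij => absurd (Subsingleton.elim i j) hij)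
  obtain ⟨j, k, hjk⟩ := exists_pair_ne ι
  refine hMC G hG _ (freezeOutside_mem hd hG hsN.1 (j := j) (by simp)) _
    (freezeOutside_mem hd hG hsN.1 (j := k) (by simpa using hjk.symm))
    isReduction_freezeOutside isReduction_freezeOutside (fun i => ?_)
    ⟨mem_solution_freezeOutside hd hMC hJO hG hsN {j}ᶜ ⟨j, by simp⟩,
      mem_solution_freezeOutside hd hMC hJO hG hsN {j} ⟨k, by simpa using hjk.symm⟩⟩
  rw [freezeOutside_S_union]
  simp

end Characterization

theorem nash_characterization_general [DecidableEq ι] [Fintype ι]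
    (Γ : Set (Game ι σ)) (φ : Game ι σ → Set (∀ i, σ i))
    (hsol : ∀ G ∈ Γ, φ G ⊆ G.profiles) (hd : DClosed Γ) :
    (SatIIS Γ φ ∧ SatMC Γ φ ∧ SatISDS Γ φ ∧ SatJO Γ φ) ↔
      ∀ G ∈ Γ, φ G = {s | G.IsNash s} := by
  constructor
  · rintro ⟨hIIS, hMC, hISDS, hJO⟩ G hG
    ext s
    exact ⟨isNash_of_mem_solution hsol hd hIIS hISDS hG, mem_solution_of_isNash hd hMC hJO hG⟩
  · intro hφ
    refine ⟨fun G hG G' hG' hred s ⟨hs', hs⟩ => ?_,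
      fun G hG G' hG' G'' hG'' h' h'' hS s ⟨hs', hs''⟩ => ?_,
      fun G hG G' hG' hstrict => ?_, fun G hG s hs => ?_⟩
    · rw [hφ G hG] at hs
      rw [hφ G' hG']
      exact hs.of_isReduction hred hs'
    · rw [hφ G' hG'] at hs'
      rw [hφ G'' hG''] at hs''
      rw [hφ G hG]
      exact hs'.of_union h' h'' hS hs''
    · rw [hφ G hG, hφ G' hG']
      ext s
      exact hstrict.isNash_iff.symm
    · rw [hφ G hG]
      exact hs.isNash

/-- Theorem 1: on a d-closed class, a solution concept satisfies
IIS, MC, ISDS and JO iff it is the Nash equilibrium correspondence. -/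
theorem nash_characterization [DecidableEq ι] [Fintype ι] [Nonempty ι]
    (Γ : Set (Game ι σ)) (φ : Game ι σ → Set (∀ i, σ i))
    (hsol : ∀ G ∈ Γ, φ G ⊆ G.profiles) (hd : DClosed Γ) :
    (SatIIS Γ φ ∧ SatMC Γ φ ∧ SatISDS Γ φ ∧ SatJO Γ φ) ↔
      ∀ G ∈ Γ, φ G = {s | G.IsNash s} :=
  nash_characterization_general Γ φ hsol hd
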